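/- arXiv:2603.17771 — 2 statements merged into one kernel-verified Lean document; each statement's English description precedes it below -/
import Mathlib

section
/- Fix d ≥ 1, γ ∈ ℝ^d, and ε > 0, and define RMSNorm : ℝ^d → ℝ^d by RMSNorm(x)_i = γ_i x_i / rms(x) with rms(x) = sqrt(‖x‖₂²/d + ε). Let L : ℝ^d → ℝ be differentiable. Then for every x ∈ ℝ^d, the gradient of the composition L ∘ RMSNorm at x satisfies ‖∇(L ∘ RMSNorm)(x)‖₂ ≤ (‖γ‖_∞ / rms(x)) · ‖∇L(RMSNorm(x))‖₂. -/
/-!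
Write `RMSNorm y = (rms y)⁻¹ • Γ y` with `Γ = diag γ`. At `x`, with `r = rms x`, its derivative is
`v ↦ r⁻¹ • Γ (v - (⟪x, v⟫ / (d r²)) • x)`, and since `d r² = ‖x‖² + d ε ≥ ‖x‖²` the map
`v ↦ v - (⟪x, v⟫ / (d r²)) • x` is a contraction. Hence the Jacobian has operator norm at most
`‖Γ‖ / r = ‖γ‖_∞ / r`, and the chain rule together with `‖∇f‖ = ‖Df‖` gives the bound.
-/

open Real Matrix
open scoped RealInnerProductSpace

section InvSqrtScaling

variable {E F : Type*} [NormedAddCommGroup E] [InnerProductSpace ℝ E]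
  [NormedAddCommGroup F] [NormedSpace ℝ F]

theorem norm_sub_inner_div_smul_le {x : E} {c : ℝ} (hc : ‖x‖ ^ 2 ≤ c) (v : E) :
    ‖v - (⟪x, v⟫ / c) • x‖ ≤ ‖v‖ := by
  set t := ⟪x, v⟫ / c
  have ht : t * ⟪x, v⟫ = t ^ 2 * c := by
    rcases eq_or_ne c 0 with rfl | hc0
    · simp [t]
    · simp only [t]; field_simp
  refine (sq_le_sq₀ (norm_nonneg _) (norm_nonneg _)).mp ?_
  rw [norm_sub_sq_real, real_inner_smul_right, real_inner_comm, norm_smul, mul_pow,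
    Real.norm_eq_abs, sq_abs]
  nlinarith [mul_le_mul_of_nonneg_left hc (sq_nonneg t), sq_nonneg t, sq_nonneg ‖x‖]

theorem hasFDerivAt_inv_sqrt_norm_sq_div_add {a ε : ℝ} {x : E} (hx : 0 < ‖x‖ ^ 2 / a + ε) :
    HasFDerivAt (fun y : E ↦ (√(‖y‖ ^ 2 / a + ε))⁻¹)
      (-(a * √(‖x‖ ^ 2 / a + ε) ^ 3)⁻¹ • innerSL ℝ x) x := by
  have hq : HasFDerivAt (fun y : E ↦ ‖y‖ ^ 2 / a + ε) ((2 / a) • innerSL ℝ x) x := by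
    simp only [div_eq_mul_inv]
    exact (((hasFDerivAt_id x).norm_sq.mul_const a⁻¹).add_const ε).congr_fderiv <| by
      ext y; simp; ring
  have hr : 0 < √(‖x‖ ^ 2 / a + ε) := Real.sqrt_pos.2 hx
  refine (((Real.hasDerivAt_sqrt hx.ne').inv hr.ne').comp_hasFDerivAt x hq).congr_fderiv ?_
  rw [smul_smul]
  congr 1
  field_simp

theorem exists_hasFDerivAt_inv_sqrt_smul_norm_le {a ε : ℝ} (ha : 0 < a) (hε : 0 < ε)
    (T : E →L[ℝ] F) (x : E) :
    ∃ D : E →L[ℝ] F, HasFDerivAt (fun y ↦ (√(‖y‖ ^ 2 / a + ε))⁻¹ • T y) D x ∧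
      ‖D‖ ≤ ‖T‖ / √(‖x‖ ^ 2 / a + ε) := by
  have hx : 0 < ‖x‖ ^ 2 / a + ε := by positivity
  set r := √(‖x‖ ^ 2 / a + ε)
  have hr : 0 < r := Real.sqrt_pos.2 hx
  have har : a * r ^ 2 = ‖x‖ ^ 2 + a * ε := by
    rw [Real.sq_sqrt hx.le]; field_simp
  have hxc : ‖x‖ ^ 2 ≤ a * r ^ 2 := by
    rw [har]; exact le_add_of_nonneg_right (mul_pos ha hε).le
  refine ⟨_, (hasFDerivAt_inv_sqrt_norm_sq_div_add hx).smul T.hasFDerivAt, ?_⟩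
  refine ContinuousLinearMap.opNorm_le_bound _ (by positivity) fun v ↦ ?_
  have hD : r⁻¹ • T v + (-(a * r ^ 3)⁻¹ * ⟪x, v⟫) • T x
      = r⁻¹ • T (v - (⟪x, v⟫ / (a * r ^ 2)) • x) := by
    rw [map_sub, map_smul, smul_sub, smul_smul, sub_eq_add_neg, ← neg_smul]
    congr 2
    field_simp
  calc _ = ‖r⁻¹ • T (v - (⟪x, v⟫ / (a * r ^ 2)) • x)‖ := by
        simpa using congrArg norm hD
    _ ≤ r⁻¹ * (‖T‖ * ‖v‖) := by
        rw [norm_smul, Real.norm_of_nonneg (inv_nonneg.2 hr.le)]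
        gcongr
        calc ‖T _‖ ≤ ‖T‖ * ‖v - (⟪x, v⟫ / (a * r ^ 2)) • x‖ := T.le_opNorm _
          _ ≤ ‖T‖ * ‖v‖ := by gcongr; exact norm_sub_inner_div_smul_le hxc v
    _ = ‖T‖ / r * ‖v‖ := by ring

end InvSqrtScaling

theorem norm_toEuclideanCLM_diagonal_le {ι : Type*} [Fintype ι] [DecidableEq ι] (γ : ι → ℝ) :
    ‖toEuclideanCLM (𝕜 := ℝ) (diagonal γ)‖ ≤ ⨆ i, |γ i| := by
  open scoped Matrix.Norms.L2Operator in
  rw [l2_opNorm_toEuclideanCLM, l2_opNorm_diagonal]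
  exact (pi_norm_le_iff_of_nonneg (Real.iSup_nonneg fun i ↦ abs_nonneg (γ i))).2 fun i ↦
    (Real.norm_eq_abs _).trans_le (le_ciSup (f := fun i ↦ |γ i|) (Set.finite_range _).bddAbove i)

theorem norm_gradient_eq_norm_fderiv {E : Type*} [NormedAddCommGroup E] [InnerProductSpace ℝ E]
    [CompleteSpace E] (f : E → ℝ) (x : E) : ‖gradient f x‖ = ‖fderiv ℝ f x‖ :=
  (InnerProductSpace.toDual ℝ E).symm.norm_map _

/-- **Gradient attenuation of a loss through RMSNorm.**
With `rms x = √(‖x‖²/d + ε)` and `RMSNorm(x)_i = γ_i x_i / rms x`, for any differentiable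
loss `L : ℝ^d → ℝ` the gradient of `L ∘ RMSNorm` satisfies
`‖∇(L ∘ RMSNorm)(x)‖ ≤ (‖γ‖_∞ / rms x) · ‖∇L(RMSNorm x)‖`. -/
theorem rmsnorm_gradient_comp_norm_le
    {d : ℕ} (hd : 1 ≤ d) (γ : Fin d → ℝ) (ε : ℝ) (hε : 0 < ε)
    (rms : EuclideanSpace ℝ (Fin d) → ℝ)
    (hrms : ∀ x, rms x = Real.sqrt (‖x‖ ^ 2 / d + ε))
    (RMSNorm : EuclideanSpace ℝ (Fin d) → EuclideanSpace ℝ (Fin d))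
    (hRMS : ∀ x, ∀ i, RMSNorm x i = γ i * x i / rms x)
    (L : EuclideanSpace ℝ (Fin d) → ℝ) (hL : Differentiable ℝ L) :
    ∀ x : EuclideanSpace ℝ (Fin d),
      ‖gradient (L ∘ RMSNorm) x‖ ≤ (⨆ i, |γ i|) / rms x * ‖gradient L (RMSNorm x)‖ := by
  intro x
  set T := toEuclideanCLM (𝕜 := ℝ) (diagonal γ)
  have hRMS_eq : RMSNorm = fun y ↦ (√(‖y‖ ^ 2 / d + ε))⁻¹ • T y := by
    funext y; ext i
    simp [T, hRMS, hrms, ofLp_toEuclideanCLM, mulVec_diagonal, div_eq_inv_mul, mul_comm]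
  obtain ⟨D, hD, hD_norm⟩ :=
    exists_hasFDerivAt_inv_sqrt_smul_norm_le (Nat.cast_pos.2 hd) hε T x
  rw [← hRMS_eq] at hD
  rw [← hrms] at hD_norm
  rw [norm_gradient_eq_norm_fderiv, norm_gradient_eq_norm_fderiv,
    ((hL _).hasFDerivAt.comp x hD).fderiv]
  calc _ ≤ ‖fderiv ℝ L (RMSNorm x)‖ * ‖D‖ := ContinuousLinearMap.opNorm_comp_le _ _
    _ ≤ ‖fderiv ℝ L (RMSNorm x)‖ * ((⨆ i, |γ i|) / rms x) := by
        gcongr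
        exact hD_norm.trans <|
          div_le_div_of_nonneg_right (norm_toEuclideanCLM_diagonal_le γ) (by rw [hrms]; positivity)
    _ = _ := mul_comm _ _
end

section
/- Fix d ≥ 1 and C > 0, define φ(r) = r/(r + C), and define the V-scale map Φ : ℝ^d → ℝ^d by Φ(v) = φ(‖v‖₂²) v. Then for every v ∈ ℝ^d, the operator norm of the Fréchet derivative of Φ at v is at most 3‖v‖₂²/C. In particular, the value-path backpropagated signal through Φ is strongly attenuated for tokens with ‖v‖₂² ≪ C. -/
open scoped RealInnerProductSpace

/-!
Writing `r = ‖v‖²`, the chain rule gives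
`DΦ(v) w = φ(r) w + 2 φ'(r) ⟪v, w⟫ v`, so `‖DΦ(v)‖ ≤ φ(r) + 2 φ'(r) r`.
For `φ(r) = r/(r + C)` both `φ(r) ≤ r/C` and `φ'(r) = C/(r + C)² ≤ 1/C`, whence the bound `3r/C`.
-/

section RadialScaling

variable {E : Type*} [NormedAddCommGroup E] [InnerProductSpace ℝ E]

theorem HasDerivAt.hasFDerivAt_comp_normSq_smul {f : ℝ → ℝ} {f' : ℝ} {v : E}
    (hf : HasDerivAt f f' (‖v‖ ^ 2)) :
    HasFDerivAt (fun w : E => f (‖w‖ ^ 2) • w)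
      (f (‖v‖ ^ 2) • ContinuousLinearMap.id ℝ E + ((2 * f') • innerSL ℝ v).smulRight v) v := by
  have hnormSq : HasFDerivAt (fun w : E => ‖w‖ ^ 2) ((2 : ℝ) • innerSL ℝ v) v := by
    have := (hasFDerivAt_id v).norm_sq
    rwa [← Nat.cast_smul_eq_nsmul ℝ, Nat.cast_ofNat] at this
  have := (hf.comp_hasFDerivAt v hnormSq).smul (hasFDerivAt_id (𝕜 := ℝ) v)
  rwa [smul_smul, mul_comm f'] at this

theorem norm_smul_id_add_smulRight_innerSL_le (a b : ℝ) (v : E) :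
    ‖a • ContinuousLinearMap.id ℝ E + (b • innerSL ℝ v).smulRight v‖ ≤ |a| + |b| * ‖v‖ ^ 2 := by
  refine ContinuousLinearMap.opNorm_le_bound _ (by positivity) fun w => ?_
  calc ‖a • w + (b * ⟪v, w⟫) • v‖
      ≤ |a| * ‖w‖ + |b| * |⟪v, w⟫| * ‖v‖ := by
        refine (norm_add_le _ _).trans_eq ?_
        rw [norm_smul, norm_smul, Real.norm_eq_abs, Real.norm_eq_abs, abs_mul]
    _ ≤ |a| * ‖w‖ + |b| * (‖v‖ * ‖w‖) * ‖v‖ := by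
        gcongr; exact abs_real_inner_le_norm v w
    _ = (|a| + |b| * ‖v‖ ^ 2) * ‖w‖ := by ring

theorem HasDerivAt.norm_fderiv_comp_normSq_smul_le {f : ℝ → ℝ} {f' : ℝ} {v : E}
    (hf : HasDerivAt f f' (‖v‖ ^ 2)) :
    ‖fderiv ℝ (fun w : E => f (‖w‖ ^ 2) • w) v‖ ≤ |f (‖v‖ ^ 2)| + 2 * |f'| * ‖v‖ ^ 2 := by
  rw [hf.hasFDerivAt_comp_normSq_smul.fderiv]
  refine (norm_smul_id_add_smulRight_innerSL_le _ _ v).trans_eq ?_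
  rw [abs_mul, abs_two, mul_assoc]

end RadialScaling

section Saturation

variable {C r : ℝ}

theorem hasDerivAt_div_add_const (h : r + C ≠ 0) :
    HasDerivAt (fun s : ℝ => s / (s + C)) (C / (r + C) ^ 2) r :=
  ((hasDerivAt_id' r).div ((hasDerivAt_id' r).add_const C) h).congr_deriv (by ring)

theorem div_add_const_le_div (hr : 0 ≤ r) (hC : 0 < C) : r / (r + C) ≤ r / C :=
  div_le_div_of_nonneg_left hr hC (le_add_of_nonneg_left hr)

theorem div_add_const_sq_le_one_div (hr : 0 ≤ r) (hC : 0 < C) : C / (r + C) ^ 2 ≤ 1 / C := by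
  rw [div_le_div_iff₀ (by positivity) hC]
  nlinarith

end Saturation

theorem vscale_fderiv_opNorm_le_general
    {d : ℕ} (C : ℝ) (hC : 0 < C)
    (φ : ℝ → ℝ) (hφ : ∀ r, φ r = r / (r + C))
    (Φ : EuclideanSpace ℝ (Fin d) → EuclideanSpace ℝ (Fin d))
    (hΦ : ∀ v, Φ v = φ (‖v‖ ^ 2) • v) :
    ∀ v : EuclideanSpace ℝ (Fin d),
      ‖fderiv ℝ Φ v‖ ≤ 3 * ‖v‖ ^ 2 / C := by
  obtain rfl : φ = fun s => s / (s + C) := funext hφ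
  obtain rfl : Φ = fun w => (‖w‖ ^ 2 / (‖w‖ ^ 2 + C)) • w := funext hΦ
  intro v
  have hr : 0 ≤ ‖v‖ ^ 2 := by positivity
  have hrC : 0 < ‖v‖ ^ 2 + C := by positivity
  calc ‖fderiv ℝ (fun w => (‖w‖ ^ 2 / (‖w‖ ^ 2 + C)) • w) v‖
      ≤ |‖v‖ ^ 2 / (‖v‖ ^ 2 + C)| + 2 * |C / (‖v‖ ^ 2 + C) ^ 2| * ‖v‖ ^ 2 :=
        (hasDerivAt_div_add_const hrC.ne').norm_fderiv_comp_normSq_smul_le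
    _ ≤ ‖v‖ ^ 2 / C + 2 * (1 / C) * ‖v‖ ^ 2 := by
        rw [abs_of_nonneg (by positivity), abs_of_nonneg (by positivity)]
        gcongr ?_ + 2 * ?_ * _
        · exact div_add_const_le_div hr hC
        · exact div_add_const_sq_le_one_div hr hC
    _ = 3 * ‖v‖ ^ 2 / C := by ring

/-- **Strong attenuation of the value path for small-norm values.**
With `φ(r) = r/(r + C)` and `Φ(v) = φ(‖v‖²) v`, the operator norm of the Fréchet
derivative of `Φ` at `v` is at most `3‖v‖²/C`; hence the backpropagated signal through
`Φ` is strongly attenuated when `‖v‖² ≪ C`. -/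
theorem vscale_fderiv_opNorm_le
    {d : ℕ} (hd : 1 ≤ d) (C : ℝ) (hC : 0 < C)
    (φ : ℝ → ℝ) (hφ : ∀ r, φ r = r / (r + C))
    (Φ : EuclideanSpace ℝ (Fin d) → EuclideanSpace ℝ (Fin d))
    (hΦ : ∀ v, Φ v = φ (‖v‖ ^ 2) • v) :
    ∀ v : EuclideanSpace ℝ (Fin d),
      ‖fderiv ℝ Φ v‖ ≤ 3 * ‖v‖ ^ 2 / C :=
  vscale_fderiv_opNorm_le_general C hC φ hφ Φ hΦ
end
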